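/- arXiv:0810.4387 — 5 statements merged into one kernel-verified Lean document; each statement's English description precedes it below -/
import Mathlib

section
/- The number of walks of length n = 3m + 2i + j from (0,0) to (i,j) with steps W=(-1,0), N=(0,1), SE=(1,-1), staying in the quarter plane {(a,b) : a ≥ 0, b ≥ 0}, equals (i+1)(j+1)(i+j+2)(3m+2i+j)! / (m!(m+i+1)!(m+i+j+2)!). -/
/-- Number of quarter-plane walks of length `n` with steps in `S`, starting at `(0,0)`,
staying in the quarter plane, and ending at `e`. -/
noncomputable def qwalkCount (S : Set (ℤ × ℤ)) (n : ℕ) (e : ℤ × ℤ) : ℕ :=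
  Nat.card {w : Fin (n + 1) → ℤ × ℤ //
    w 0 = (0, 0) ∧
    (∀ i : Fin n, w i.succ - w i.castSucc ∈ S) ∧
    (∀ i, 0 ≤ (w i).1 ∧ 0 ≤ (w i).2) ∧
    w (Fin.last n) = e}

/-!
Removing the last step gives, for `(i, j)` in the quadrant,
`q(n+1; i, j) = q(n; i+1, j) + q(n; i, j-1) + q(n; i-1, j+1)`, and the theorem follows by
induction on `n`. Multiplied by `m! (m+i+1)! (m+i+j+2)!`, the three terms on the right are
`m (i+2)(j+1)(i+j+3)`, `(m+i+j+2)(i+1) j (i+j+1)` and `(m+i+1) i (j+2)(i+j+2)` times `n!`,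
and these add up to `(3m+2i+j)(i+1)(j+1)(i+j+2)`. A term whose predecessor leaves the quadrant,
or has `2x + y > n` (a step raises `2x + y` by at most one), vanishes on both sides.
-/

open Nat

abbrev QuarterWalk (S : Set (ℤ × ℤ)) (n : ℕ) (e : ℤ × ℤ) : Type :=
  {w : Fin (n + 1) → ℤ × ℤ //
    w 0 = (0, 0) ∧
    (∀ i : Fin n, w i.succ - w i.castSucc ∈ S) ∧
    (∀ i, 0 ≤ (w i).1 ∧ 0 ≤ (w i).2) ∧
    w (Fin.last n) = e}

namespace QuarterWalk

variable {S : Set (ℤ × ℤ)} {n : ℕ} {e : ℤ × ℤ}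

instance : Subsingleton (QuarterWalk S 0 e) :=
  ⟨fun w w' => Subtype.ext <| funext fun k => by rw [Fin.fin_one_eq_zero k, w.2.1, w'.2.1]⟩

lemma isEmpty_of_not_nonneg (he : ¬(0 ≤ e.1 ∧ 0 ≤ e.2)) : IsEmpty (QuarterWalk S n e) :=
  ⟨fun w => he (w.2.2.2.2 ▸ w.2.2.2.1 _)⟩

def snocEquiv (he : 0 ≤ e.1 ∧ 0 ≤ e.2) :
    (Σ s : S, QuarterWalk S n (e - s)) ≃ QuarterWalk S (n + 1) e where
  toFun := fun ⟨⟨s, hs⟩, w, h0, hstep, hquad, hlast⟩ =>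
    ⟨Fin.snoc w e, (Fin.snoc_castSucc (n := n + 1) _ _ 0).trans h0,
      fun k => by
        induction k using Fin.lastCases with
        | last => simpa [hlast] using hs
        | cast k => simpa [← Fin.castSucc_succ] using hstep k,
      fun k => by
        induction k using Fin.lastCases with
        | last => simpa using he
        | cast k => simpa using hquad k,
      Fin.snoc_last _ _⟩
  invFun := fun ⟨w, h0, hstep, hquad, hlast⟩ =>
    ⟨⟨e - w (Fin.last n).castSucc, by simpa [hlast] using hstep (Fin.last n)⟩,
      Fin.init w, h0, fun k => by simpa [Fin.init, ← Fin.castSucc_succ] using hstep k.castSucc,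
      fun _ => hquad _, by simp [Fin.init]⟩
  left_inv := fun ⟨_, _, _, _, _, hlast⟩ =>
    Sigma.subtype_ext (Subtype.ext (by simp [hlast])) (by simp)
  right_inv := fun ⟨_, _, _, _, hlast⟩ => Subtype.ext (by simp [← hlast])

instance finite [Finite S] : ∀ n e, Finite (QuarterWalk S n e)
  | 0, _ => Finite.of_subsingleton
  | n + 1, e => by
    by_cases he : 0 ≤ e.1 ∧ 0 ≤ e.2
    · have := fun s : S => finite n (e - s)
      exact Finite.of_equiv _ (snocEquiv he)
    · have := isEmpty_of_not_nonneg (S := S) (n := n + 1) he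
      infer_instance

end QuarterWalk

section
variable {S : Set (ℤ × ℤ)} {n : ℕ} {e : ℤ × ℤ}

lemma qwalkCount_zero : qwalkCount S 0 e = if e = (0, 0) then 1 else 0 := by
  split_ifs with he
  · subst he
    have : Nonempty (QuarterWalk S 0 (0, 0)) :=
      ⟨fun _ => (0, 0), rfl, fun k => k.elim0, fun _ => ⟨le_rfl, le_rfl⟩, rfl⟩
    exact Nat.card_unique
  · have : IsEmpty (QuarterWalk S 0 e) := ⟨fun w => he (w.2.2.2.2.symm.trans w.2.1)⟩
    exact Nat.card_of_isEmpty

lemma qwalkCount_of_not_nonneg (he : ¬(0 ≤ e.1 ∧ 0 ≤ e.2)) : qwalkCount S n e = 0 :=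
  have := QuarterWalk.isEmpty_of_not_nonneg (S := S) (n := n) he
  Nat.card_of_isEmpty

lemma qwalkCount_succ (S : Finset (ℤ × ℤ)) (he : 0 ≤ e.1 ∧ 0 ≤ e.2) :
    qwalkCount S (n + 1) e = ∑ s ∈ S, qwalkCount S n (e - s) := by
  rw [qwalkCount, ← Nat.card_congr (QuarterWalk.snocEquiv he), Nat.card_sigma]
  exact S.sum_coe_sort fun s => qwalkCount S n (e - s)

lemma qwalkCount_eq_zero_of_lt (S : Finset (ℤ × ℤ)) (a b : ℤ)
    (hS : ∀ s ∈ S, a * s.1 + b * s.2 ≤ 1) :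
    ∀ {n : ℕ} {e : ℤ × ℤ}, n < a * e.1 + b * e.2 → qwalkCount S n e = 0
  | 0, e, h => by
    rw [qwalkCount_zero, if_neg]
    rintro rfl
    simp at h
  | n + 1, e, h => by
    by_cases he : 0 ≤ e.1 ∧ 0 ≤ e.2
    · rw [qwalkCount_succ S he]
      refine Finset.sum_eq_zero fun s hs => qwalkCount_eq_zero_of_lt S a b hS ?_
      have := hS s hs
      simp only [Prod.fst_sub, Prod.snd_sub]
      push_cast at h
      linarith
    · exact qwalkCount_of_not_nonneg he

end

def stepsWNSE : Finset (ℤ × ℤ) := {(-1, 0), (0, 1), (1, -1)}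

lemma qwalkCount_stepsWNSE_succ {n : ℕ} {x y : ℤ} (hx : 0 ≤ x) (hy : 0 ≤ y) :
    qwalkCount stepsWNSE (n + 1) (x, y) = qwalkCount stepsWNSE n (x + 1, y) +
      qwalkCount stepsWNSE n (x, y - 1) + qwalkCount stepsWNSE n (x - 1, y + 1) := by
  rw [qwalkCount_succ _ ⟨hx, hy⟩, stepsWNSE, Finset.sum_insert (by decide),
    Finset.sum_insert (by decide), Finset.sum_singleton]
  simp only [Prod.mk_sub_mk, sub_neg_eq_add, sub_zero, add_assoc]

def walkDenominator (m i j : ℕ) : ℕ := m ! * (m + i + 1)! * (m + i + j + 2)!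

lemma walkDenominator_succ_left (m i j : ℕ) :
    walkDenominator (m + 1) i j = (m + 1) * walkDenominator m (i + 1) j := by
  rw [walkDenominator, walkDenominator, factorial_succ m, add_right_comm m 1 i,
    add_assoc m i 1]
  ring

lemma walkDenominator_succ_mid (m i j : ℕ) :
    walkDenominator m (i + 1) j = (m + i + 2) * walkDenominator m i (j + 1) := by
  simp only [walkDenominator, ← add_assoc, add_right_comm _ 1 j]
  rw [factorial_succ (m + i + 1)]
  ring

lemma walkDenominator_succ_right (m i j : ℕ) :
    walkDenominator m i (j + 1) = (m + i + j + 3) * walkDenominator m i j := by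
  simp only [walkDenominator, ← add_assoc, add_right_comm _ 1 2]
  rw [factorial_succ (m + i + j + 2)]
  ring

def HasClosedForm (n : ℕ) : Prop :=
  ∀ m i j : ℕ, 3 * m + 2 * i + j = n →
    qwalkCount stepsWNSE n (i, j) * walkDenominator m i j = (i + 1) * (j + 1) * (i + j + 2) * n !

namespace HasClosedForm

variable {n m i j : ℕ}

lemma last_step_west (hn : HasClosedForm n) (h : 3 * m + 2 * i + j = n + 1) :
    qwalkCount stepsWNSE n (i + 1, j) * walkDenominator m i j =
      m * ((i + 2) * (j + 1) * (i + j + 3)) * n ! := by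
  rcases m with _ | m
  · rw [qwalkCount_eq_zero_of_lt stepsWNSE 2 1 (by decide) (by push_cast; omega)]
    simp
  · have := hn m (i + 1) j (by omega)
    push_cast at this
    rw [walkDenominator_succ_left, mul_left_comm, this]
    ring

lemma last_step_north (hn : HasClosedForm n) (h : 3 * m + 2 * i + j = n + 1) :
    qwalkCount stepsWNSE n (i, j - 1) * walkDenominator m i j =
      (m + i + j + 2) * ((i + 1) * j * (i + j + 1)) * n ! := by
  rcases j with _ | j
  · rw [qwalkCount_of_not_nonneg (by simp)]
    simp
  · have := hn m i j (by omega)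
    push_cast
    rw [add_sub_cancel_right, walkDenominator_succ_right, mul_left_comm, this]
    ring

lemma last_step_southeast (hn : HasClosedForm n) (h : 3 * m + 2 * i + j = n + 1) :
    qwalkCount stepsWNSE n (i - 1, j + 1) * walkDenominator m i j =
      (m + i + 1) * (i * (j + 2) * (i + j + 2)) * n ! := by
  rcases i with _ | i
  · rw [qwalkCount_of_not_nonneg (by simp)]
    simp
  · have := hn m i (j + 1) (by omega)
    push_cast at this ⊢
    rw [add_sub_cancel_right, walkDenominator_succ_mid, mul_left_comm, this]
    ring

lemma succ (hn : HasClosedForm n) : HasClosedForm (n + 1) := by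
  intro m i j h
  rw [qwalkCount_stepsWNSE_succ (by positivity) (by positivity), add_mul, add_mul,
    hn.last_step_west h, hn.last_step_north h, hn.last_step_southeast h, factorial_succ, ← h]
  ring

end HasClosedForm

lemma hasClosedForm : ∀ n, HasClosedForm n
  | 0 => fun m i j h => by
    obtain ⟨rfl, rfl, rfl⟩ : m = 0 ∧ i = 0 ∧ j = 0 := by omega
    simp [qwalkCount_zero, walkDenominator]
  | n + 1 => (hasClosedForm n).succ

theorem walks_WNSE_endpoint (m i j : ℕ) :
    qwalkCount {(-1, 0), (0, 1), (1, -1)} (3 * m + 2 * i + j) ((i : ℤ), (j : ℤ)) *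
      (Nat.factorial m * Nat.factorial (m + i + 1) * Nat.factorial (m + i + j + 2)) =
    (i + 1) * (j + 1) * (i + j + 2) * Nat.factorial (3 * m + 2 * i + j) := by
  have hS : ({(-1, 0), (0, 1), (1, -1)} : Set (ℤ × ℤ)) = stepsWNSE := by simp [stepsWNSE]
  rw [hS]
  exact hasClosedForm _ m i j rfl
end

section
/- The number of walks of length 3m from (0,0) back to (0,0) with steps W=(-1,0), N=(0,1), SE=(1,-1) confined to the quarter plane equals 2·(3m)! / (m!(m+1)!(m+2)!). -/
namespace QuarterPlaneWalk

abbrev QWalk (S : Set (ℤ × ℤ)) (n : ℕ) (e : ℤ × ℤ) : Type :=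
  {w : Fin (n + 1) → ℤ × ℤ //
    w 0 = (0, 0) ∧
    (∀ i : Fin n, w i.succ - w i.castSucc ∈ S) ∧
    (∀ i, 0 ≤ (w i).1 ∧ 0 ≤ (w i).2) ∧
    w (Fin.last n) = e}

variable {n : ℕ} {e : ℤ × ℤ}

section

variable {S : Set (ℤ × ℤ)}

theorem isEmpty_qwalk (he : ¬(0 ≤ e.1 ∧ 0 ≤ e.2)) : IsEmpty (QWalk S n e) :=
  ⟨fun ⟨_, _, _, hw, hlast⟩ => he (hlast ▸ hw (Fin.last n))⟩

theorem qwalkCount_eq_zero_of_not_nonneg (he : ¬(0 ≤ e.1 ∧ 0 ≤ e.2)) : qwalkCount S n e = 0 :=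
  haveI := isEmpty_qwalk (S := S) (n := n) he
  Nat.card_of_isEmpty

theorem subsingleton_qwalk_zero : Subsingleton (QWalk S 0 e) :=
  ⟨fun w v => Subtype.ext <| funext fun i => by rw [Fin.eq_zero i, w.2.1, v.2.1]⟩

theorem qwalkCount_zero :
    qwalkCount S 0 e = if e = (0, 0) then 1 else 0 := by
  have := subsingleton_qwalk_zero (S := S) (e := e)
  split_ifs with he
  · subst he
    exact Nat.card_eq_one_iff_unique.mpr
      ⟨this, ⟨⟨fun _ => (0, 0), rfl, fun i => i.elim0, fun _ => ⟨le_rfl, le_rfl⟩, rfl⟩⟩⟩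
  · exact Nat.card_eq_zero.mpr <| .inl ⟨fun ⟨w, h0, _, _, hlast⟩ => he (hlast ▸ h0)⟩

def qwalkSuccEquiv (he : 0 ≤ e.1 ∧ 0 ≤ e.2) :
    QWalk S (n + 1) e ≃ Σ s : S, QWalk S n (e - s) where
  toFun w :=
    ⟨⟨e - w.1 (Fin.last n).castSucc, by
        simpa [← w.2.2.2.2] using w.2.2.1 (Fin.last n)⟩,
      ⟨Fin.init w.1, w.2.1, fun i => by simpa [Fin.init] using w.2.2.1 i.castSucc,
        fun i => w.2.2.2.1 _, by simp [Fin.init]⟩⟩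
  invFun x := ⟨Fin.snoc x.2.1 e, by
    obtain ⟨⟨s, hs⟩, v, h0, hstep, hv, hlast⟩ := x
    refine ⟨?_, fun i => ?_, fun i => ?_, Fin.snoc_last _ _⟩
    · simpa using h0
    · induction i using Fin.lastCases with
      | last => simpa [hlast] using hs
      | cast j =>
        rw [Fin.succ_castSucc, Fin.snoc_castSucc, Fin.snoc_castSucc]
        exact hstep j
    · induction i using Fin.lastCases with
      | last => simp [he]
      | cast j => simpa using hv j⟩
  left_inv w := Subtype.ext <| by
    simp only [← w.2.2.2.2, Fin.snoc_init_self]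
  right_inv x := Sigma.subtype_ext (Subtype.ext (by simp [x.2.2.2.2.2])) (by simp)

end

section

variable (S : Finset (ℤ × ℤ))

theorem finite_qwalk (n : ℕ) (e : ℤ × ℤ) : Finite (QWalk S n e) := by
  induction n generalizing e with
  | zero =>
    have := subsingleton_qwalk_zero (S := S) (e := e)
    exact Finite.of_subsingleton
  | succ n ih =>
    by_cases he : 0 ≤ e.1 ∧ 0 ≤ e.2
    · exact .of_equiv _ (qwalkSuccEquiv he).symm
    · have := isEmpty_qwalk (S := S) (n := n + 1) he
      infer_instance

theorem qwalkCount_succ (n : ℕ) (he : 0 ≤ e.1 ∧ 0 ≤ e.2) :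
    qwalkCount S (n + 1) e = ∑ s ∈ S, qwalkCount S n (e - s) := by
  have := finite_qwalk S n
  rw [qwalkCount, Nat.card_congr (qwalkSuccEquiv he), Nat.card_sigma,
    ← Finset.sum_coe_sort S]
  rfl

theorem qwalkCount_eq_zero_of_lt (a b : ℤ)
    (hS : ∀ s ∈ S, a * s.1 + b * s.2 ≤ 1) (h : (n : ℤ) < a * e.1 + b * e.2) :
    qwalkCount S n e = 0 := by
  induction n generalizing e with
  | zero =>
    rw [qwalkCount_zero, if_neg]
    rintro rfl
    simp at h
  | succ n ih =>
    by_cases he : 0 ≤ e.1 ∧ 0 ≤ e.2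
    · rw [qwalkCount_succ S n he]
      refine Finset.sum_eq_zero fun s hs => ih ?_
      simp only [Prod.fst_sub, Prod.snd_sub]
      push_cast at h
      linarith [hS s hs]
    · exact qwalkCount_eq_zero_of_not_nonneg he

end

open scoped Nat

def wnseSteps : Finset (ℤ × ℤ) := {(-1, 0), (0, 1), (1, -1)}

theorem qwalkCount_wnseSteps_succ (n q p : ℕ) :
    qwalkCount wnseSteps (n + 1) (q, p) =
      qwalkCount wnseSteps n (q + 1, p) + qwalkCount wnseSteps n (q, p - 1) +
        qwalkCount wnseSteps n (q - 1, p + 1) := by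
  rw [qwalkCount_succ _ n (by simp), wnseSteps, Finset.sum_insert (by decide),
    Finset.sum_pair (by decide), add_assoc]
  simp [sub_eq_add_neg]

/-- `n! ∏ (lᵢ - lⱼ) / ∏ lᵢ!` with `l = (c+q+p+2, c+q+1, c)`, denominators cleared: Frobenius' count
of standard Young tableaux of shape `(c+q+p, c+q, c)`. -/
def FrobeniusFormula (n : ℕ) : Prop :=
  ∀ c q p : ℕ, 3 * c + 2 * q + p = n →
    qwalkCount wnseSteps n (q, p) * ((c + q + p + 2)! * (c + q + 1)! * c !) =
      n ! * ((p + 1) * (q + 1) * (p + q + 2))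

theorem frobeniusFormula_zero : FrobeniusFormula 0 := by
  intro c q p h
  obtain ⟨rfl, rfl, rfl⟩ : c = 0 ∧ q = 0 ∧ p = 0 := by omega
  simp [qwalkCount_zero]

namespace FrobeniusFormula

variable {n c q p : ℕ}

theorem west (ih : FrobeniusFormula n) (h : 3 * c + 2 * q + p = n + 1) :
    qwalkCount wnseSteps n (q + 1, p) * ((c + q + p + 2)! * (c + q + 1)! * c !) =
      c * (n ! * ((p + 1) * (q + 2) * (p + q + 3))) := by
  rcases c with _ | c
  · rw [qwalkCount_eq_zero_of_lt wnseSteps 2 1 (by decide) (by push_cast; omega), zero_mul,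
      zero_mul]
  · have := ih c (q + 1) p (by omega)
    push_cast at this
    rw [show c + 1 + q + p + 2 = c + (q + 1) + p + 2 by ring,
      show c + 1 + q + 1 = c + (q + 1) + 1 by ring, Nat.factorial_succ c]
    linear_combination (c + 1) * this

theorem north (ih : FrobeniusFormula n) (h : 3 * c + 2 * q + p = n + 1) :
    qwalkCount wnseSteps n (q, p - 1) * ((c + q + p + 2)! * (c + q + 1)! * c !) =
      (c + q + p + 2) * (n ! * (p * (q + 1) * (p + q + 1))) := by
  rcases p with _ | p
  · simp [qwalkCount_eq_zero_of_not_nonneg]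
  · have := ih c q p (by omega)
    push_cast
    rw [add_sub_cancel_right, show c + q + (p + 1) + 2 = c + q + p + 2 + 1 by ring,
      Nat.factorial_succ]
    linear_combination (c + q + p + 3) * this

theorem southEast (ih : FrobeniusFormula n) (h : 3 * c + 2 * q + p = n + 1) :
    qwalkCount wnseSteps n (q - 1, p + 1) * ((c + q + p + 2)! * (c + q + 1)! * c !) =
      (c + q + 1) * (n ! * ((p + 2) * q * (p + q + 2))) := by
  rcases q with _ | q
  · simp [qwalkCount_eq_zero_of_not_nonneg]
  · have := ih c q (p + 1) (by omega)
    push_cast at this ⊢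
    rw [add_sub_cancel_right, show c + (q + 1) + p + 2 = c + q + (p + 1) + 2 by ring,
      show c + (q + 1) + 1 = c + q + 1 + 1 by ring, Nat.factorial_succ (c + q + 1)]
    linear_combination (c + q + 2) * this

theorem succ (ih : FrobeniusFormula n) : FrobeniusFormula (n + 1) := by
  intro c q p h
  rw [qwalkCount_wnseSteps_succ, add_mul, add_mul, ih.west h, ih.north h, ih.southEast h,
    Nat.factorial_succ, ← h]
  ring

end FrobeniusFormula

theorem frobeniusFormula (n : ℕ) : FrobeniusFormula n := by
  induction n with
  | zero => exact frobeniusFormula_zero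
  | succ n ih => exact ih.succ

end QuarterPlaneWalk

theorem walks_WNSE_origin (m : ℕ) :
    qwalkCount {(-1, 0), (0, 1), (1, -1)} (3 * m) (0, 0) *
      (Nat.factorial m * Nat.factorial (m + 1) * Nat.factorial (m + 2)) =
    2 * Nat.factorial (3 * m) := by
  have h := QuarterPlaneWalk.frobeniusFormula (3 * m) m 0 0 (by ring)
  have hS : ({(-1, 0), (0, 1), (1, -1)} : Set (ℤ × ℤ)) = QuarterPlaneWalk.wnseSteps := by
    simp [QuarterPlaneWalk.wnseSteps]
  simp only [add_zero, zero_add] at h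
  rw [hS]
  linear_combination h
end

section
/- Let N(t) be the unique formal power series with N = t(1 + 2N + 4N²). Then N(t) = Σ_{n≥0} t^{n+1} · 2^n · M_n, where M_n = Σ_{k=0}^{⌊n/2⌋} C(n,2k)·C(2k,k)/(k+1) is the n-th Motzkin number. -/
/-!
With `M(t) = ∑ Mₙ tⁿ`, the Catalan recurrence together with the identity
`∑_{i+j=n} C(i,r) C(j,s) = C(n+1, r+s+1)` gives `M_{n+2} = M_{n+1} + ∑_{i+j=n} Mᵢ Mⱼ`,
i.e. `M = 1 + tM + t²M²`. Hence `t M(2t)` solves `N = t(1 + 2N + 4N²)`. The solution is unique: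
the difference `D` of two solutions satisfies `D = t D U` for some series `U`, so every power
of `t` divides `D`.
-/

/-- The `n`-th Motzkin number. -/
def motzkin (n : ℕ) : ℕ :=
  ∑ k ∈ Finset.range (n / 2 + 1), n.choose (2 * k) * ((2 * k).choose k / (k + 1))

open Finset Finset.Nat PowerSeries

theorem Nat.sum_antidiagonal_choose_mul_choose (r s n : ℕ) :
    ∑ ij ∈ antidiagonal n, ij.1.choose r * ij.2.choose s = (n + 1).choose (r + s + 1) := by
  induction n generalizing s with
  | zero => rcases r with _ | _ <;> rcases s with _ | _ <;> simp [Nat.choose_eq_zero_of_lt]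
  | succ n ih =>
    rw [sum_antidiagonal_succ']
    rcases s with _ | s
    · have h := ih 0
      simp only [Nat.choose_zero_right, mul_one, add_zero] at h ⊢
      rw [h, Nat.choose_succ_succ' (n + 1)]
    · simp only [Nat.choose_succ_succ' _ s, mul_add, sum_add_distrib, ih, Nat.choose_zero_succ,
        mul_zero, zero_add]
      rw [Nat.choose_succ_succ' (n + 1) (r + (s + 1))]
      ring_nf

theorem motzkin_eq_sum_range {n K : ℕ} (hK : n < 2 * K) :
    motzkin n = ∑ k ∈ range K, n.choose (2 * k) * catalan k := by
  have hsub : range (n / 2 + 1) ⊆ range K := range_subset_range.mpr (by omega)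
  rw [motzkin, ← sum_subset hsub fun k _ hk => ?_]
  · refine sum_congr rfl fun k _ => ?_
    rw [catalan_eq_centralBinom_div, Nat.centralBinom_eq_two_mul_choose]
  · rw [mem_range] at hk
    rw [Nat.choose_eq_zero_of_lt (by omega), zero_mul]

theorem motzkin_succ (n : ℕ) :
    motzkin (n + 1) = motzkin n + ∑ k ∈ range n, n.choose (2 * k + 1) * catalan (k + 1) := by
  rw [motzkin_eq_sum_range (K := n + 1) (by omega), motzkin_eq_sum_range (K := n + 1) (by omega),
    sum_range_succ', sum_range_succ']
  simp only [mul_add, mul_one, mul_zero, Nat.choose_succ_succ', Nat.choose_zero_right, add_mul,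
    sum_add_distrib]
  ring

/-- Both sides equal `∑_{a,b ≤ n} C(n+1, 2a+2b+1) Cₐ C_b`: the left one by the upper Vandermonde
identity, the right one by the Catalan recurrence. -/
theorem sum_antidiagonal_motzkin_mul_motzkin (n : ℕ) :
    ∑ ij ∈ antidiagonal n, motzkin ij.1 * motzkin ij.2 =
      ∑ k ∈ range (n + 1), (n + 1).choose (2 * k + 1) * catalan (k + 1) := by
  set f : ℕ → ℕ → ℕ := fun a b => (n + 1).choose (2 * a + 2 * b + 1) * (catalan a * catalan b)
  have lhs : ∑ ij ∈ antidiagonal n, motzkin ij.1 * motzkin ij.2 =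
      ∑ a ∈ range (n + 1), ∑ b ∈ range (n + 1), f a b := by
    calc ∑ ij ∈ antidiagonal n, motzkin ij.1 * motzkin ij.2
        = ∑ ij ∈ antidiagonal n, ∑ a ∈ range (n + 1), ∑ b ∈ range (n + 1),
            ij.1.choose (2 * a) * ij.2.choose (2 * b) * (catalan a * catalan b) := by
          refine sum_congr rfl fun ij hij => ?_
          rw [HasAntidiagonal.mem_antidiagonal] at hij
          rw [motzkin_eq_sum_range (K := n + 1) (by omega),
            motzkin_eq_sum_range (K := n + 1) (by omega), sum_mul_sum]
          exact sum_congr rfl fun a _ => sum_congr rfl fun b _ => by ring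
      _ = _ := by
          rw [sum_comm]
          refine sum_congr rfl fun a _ => ?_
          rw [sum_comm]
          refine sum_congr rfl fun b _ => ?_
          rw [← sum_mul, Nat.sum_antidiagonal_choose_mul_choose]
  have rhs : ∑ k ∈ range (n + 1), (n + 1).choose (2 * k + 1) * catalan (k + 1) =
      ∑ a ∈ range (n + 1), ∑ b ∈ range (n + 1), f a b := by
    calc ∑ k ∈ range (n + 1), (n + 1).choose (2 * k + 1) * catalan (k + 1)
        = ∑ k ∈ range (n + 1), ∑ a ∈ range (k + 1), f a (k - a) := by
          refine sum_congr rfl fun k _ => ?_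
          rw [catalan_succ', mul_sum, sum_antidiagonal_eq_sum_range_succ_mk]
          refine sum_congr rfl fun a ha => ?_
          rw [mem_range] at ha
          simp only [f]
          congr 3
          omega
      _ = ∑ a ∈ range (n + 1), ∑ b ∈ range (n + 1 - a), f a b := sum_range_diag_flip _ _
      _ = _ := by
          refine sum_congr rfl fun a ha => sum_subset (range_subset_range.mpr (by omega)) ?_
          intro b hb hb'
          simp only [mem_range] at ha hb hb'
          simp only [f]
          rw [Nat.choose_eq_zero_of_lt (by omega), zero_mul]
  rw [lhs, rhs]

theorem motzkin_succ_succ (n : ℕ) :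
    motzkin (n + 2) = motzkin (n + 1) + ∑ ij ∈ antidiagonal n, motzkin ij.1 * motzkin ij.2 := by
  rw [motzkin_succ (n + 1), sum_antidiagonal_motzkin_mul_motzkin]

noncomputable def motzkinSeries (R : Type*) [CommSemiring R] : R⟦X⟧ :=
  PowerSeries.mk fun n => (motzkin n : R)

theorem motzkinSeries_eq (R : Type*) [CommSemiring R] :
    motzkinSeries R = 1 + X * motzkinSeries R + X ^ 2 * motzkinSeries R ^ 2 := by
  ext (_ | _ | n)
  · simp [motzkinSeries, motzkin]
  · simp [motzkinSeries, motzkin, coeff_X_pow_mul']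
  · rw [map_add, map_add, coeff_succ_X_mul, coeff_X_pow_mul', if_pos (by omega), sq,
      coeff_mul, coeff_one, if_neg (by omega)]
    simp only [motzkinSeries, coeff_mk, motzkin_succ_succ]
    push_cast
    ring

theorem PowerSeries.eq_zero_of_eq_X_mul_mul {R : Type*} [CommSemiring R] {D U : R⟦X⟧}
    (h : D = X * (D * U)) : D = 0 := by
  have hdvd : ∀ k, X ^ k ∣ D := fun k => by
    induction k with
    | zero => exact one_dvd D
    | succ k ih => rw [h, pow_succ']; exact mul_dvd_mul_left X (dvd_mul_of_dvd_left ih U)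
  ext n
  exact X_pow_dvd_iff.mp (hdvd (n + 1)) n (Nat.lt_succ_self n)

theorem PowerSeries.eq_of_eq_X_mul_quadratic {R : Type*} [CommRing R] {a b N N' : R⟦X⟧}
    (hN : N = X * (1 + a * N + b * N ^ 2)) (hN' : N' = X * (1 + a * N' + b * N' ^ 2)) :
    N = N' :=
  sub_eq_zero.mp <| eq_zero_of_eq_X_mul_mul (U := a + b * (N + N')) <| by
    linear_combination hN - hN'

theorem X_mul_rescale_motzkinSeries_eq {R : Type*} [CommRing R] (a : R) :
    X * rescale a (motzkinSeries R) =
      X * (1 + C a * (X * rescale a (motzkinSeries R)) +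
        C (a ^ 2) * (X * rescale a (motzkinSeries R)) ^ 2) := by
  conv_lhs => rw [motzkinSeries_eq]
  simp only [map_add, map_mul, map_pow, map_one, rescale_X]
  ring

theorem series_N_eq_two_pow_motzkin_general (N : PowerSeries ℚ)
    (hN : N = PowerSeries.X * (1 + 2 * N + 4 * N ^ 2)) :
    ∀ n : ℕ, PowerSeries.coeff (n + 1) N = 2 ^ n * (motzkin n : ℚ) := by
  have hsol : N = X * rescale 2 (motzkinSeries ℚ) := by
    have h := X_mul_rescale_motzkinSeries_eq (2 : ℚ)
    rw [map_ofNat, show (2 : ℚ) ^ 2 = 4 by norm_num, map_ofNat] at h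
    exact eq_of_eq_X_mul_quadratic hN h
  intro n
  rw [hsol, coeff_succ_X_mul, coeff_rescale, motzkinSeries, coeff_mk]

theorem series_N_eq_two_pow_motzkin (N : PowerSeries ℚ)
    (h0 : PowerSeries.constantCoeff N = 0)
    (hN : N = PowerSeries.X * (1 + 2 * N + 4 * N ^ 2)) :
    ∀ n : ℕ, PowerSeries.coeff (n + 1) N = 2 ^ n * (motzkin n : ℚ) :=
  series_N_eq_two_pow_motzkin_general N hN
end

section
/- Let S(x,y) = x̄ + y + x·ȳ (where x̄ = 1/x, ȳ = 1/y), corresponding to steps W, N, SE. Then the birational involutions Φ(x,y) = (x̄y, y) and Ψ(x,y) = (x, xȳ) both preserve S(x,y), and the group they generate has order 6; the orbit of (x,y) is {(x,y), (x̄y,y), (x̄y,x̄), (ȳ,x̄), (ȳ,xȳ), (x,xȳ)}. -/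
/-! Φ (`x ↦ y/x`) exchanges the terms `x⁻¹` and `x y⁻¹` of `S`, and Ψ (`y ↦ x/y`) exchanges
`y` and `x y⁻¹`. Alternating them from `(x, y)` returns after six steps. The six points are
distinct: points sharing a coordinate differ in the other one, and every possible coincidence
forces `x² = y`, `y² = x` or `x y = 1`, which fail for the generic point, as evaluation at
`(2, 3)` shows. -/

noncomputable section

/-- The field ℚ(x,y) of rational functions in two variables. -/
abbrev Kf := FractionRing (MvPolynomial (Fin 2) ℚ)

/-- The rational function x. -/
noncomputable def xg : Kf := algebraMap (MvPolynomial (Fin 2) ℚ) Kf (MvPolynomial.X 0)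

/-- The rational function y. -/
noncomputable def yg : Kf := algebraMap (MvPolynomial (Fin 2) ℚ) Kf (MvPolynomial.X 1)

/-- The step polynomial S(x,y) = x̄ + y + x ȳ (steps W, N, SE). -/
noncomputable def Sfn (p : Kf × Kf) : Kf := p.1⁻¹ + p.2 + p.1 * p.2⁻¹

/-- The involution Φ(x,y) = (x̄ y, y). -/
noncomputable def Phi (p : Kf × Kf) : Kf × Kf := (p.1⁻¹ * p.2, p.2)

/-- The involution Ψ(x,y) = (x, x ȳ). -/
noncomputable def Psi (p : Kf × Kf) : Kf × Kf := (p.1, p.1 * p.2⁻¹)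

theorem FractionRing.algebraMap_ne_of_eval_ne {σ R : Type*} [CommRing R]
    (f : σ → R) {p q : MvPolynomial σ R} (h : MvPolynomial.eval f p ≠ MvPolynomial.eval f q) :
    algebraMap _ (FractionRing (MvPolynomial σ R)) p ≠ algebraMap _ _ q :=
  fun hpq => h (congrArg _ (IsFractionRing.injective _ _ hpq))

theorem ncard_orbit_eq_six {K : Type*} [Field K] {u v : K} (hu : u ≠ 0) (hv : v ≠ 0)
    (huv : u ^ 2 ≠ v) (hvu : v ^ 2 ≠ u) (h1 : u * v ≠ 1) :
    ({(u, v), (u⁻¹ * v, v), (u⁻¹ * v, u⁻¹), (v⁻¹, u⁻¹), (v⁻¹, u * v⁻¹), (u, u * v⁻¹)} :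
      Set (K × K)).ncard = 6 := by
  have f01 : u ≠ u⁻¹ * v := fun h => huv (by field_simp at h; linear_combination h)
  have f02 : u ≠ v⁻¹ := fun h => h1 (by field_simp at h; linear_combination h)
  have f12 : u⁻¹ * v ≠ v⁻¹ := fun h => hvu (by field_simp at h; linear_combination h)
  have s01 : v ≠ u⁻¹ := fun h => h1 (by field_simp at h; linear_combination h)
  have s02 : v ≠ u * v⁻¹ := fun h => hvu (by field_simp at h; linear_combination h)
  have s12 : u⁻¹ ≠ u * v⁻¹ := fun h => huv (by field_simp at h; linear_combination -h)
  simp [Set.ncard_insert_of_notMem, f01, f02, f12, s01, s02, s12, f01.symm, f02.symm]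

theorem xg_ne_zero : xg ≠ 0 := by
  rw [xg, ← map_zero (algebraMap (MvPolynomial (Fin 2) ℚ) Kf)]
  exact FractionRing.algebraMap_ne_of_eval_ne ![2, 3] (by simp)

theorem yg_ne_zero : yg ≠ 0 := by
  rw [yg, ← map_zero (algebraMap (MvPolynomial (Fin 2) ℚ) Kf)]
  exact FractionRing.algebraMap_ne_of_eval_ne ![2, 3] (by simp)

theorem xg_sq_ne_yg : xg ^ 2 ≠ yg := by
  rw [xg, yg, ← map_pow]
  exact FractionRing.algebraMap_ne_of_eval_ne ![2, 3] (by norm_num)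

theorem yg_sq_ne_xg : yg ^ 2 ≠ xg := by
  rw [xg, yg, ← map_pow]
  exact FractionRing.algebraMap_ne_of_eval_ne ![2, 3] (by norm_num)

theorem xg_mul_yg_ne_one : xg * yg ≠ 1 := by
  rw [xg, yg, ← map_mul, ← map_one (algebraMap (MvPolynomial (Fin 2) ℚ) Kf)]
  exact FractionRing.algebraMap_ne_of_eval_ne ![2, 3] (by norm_num)

section Involutions

variable {u v : Kf}

theorem Sfn_Phi (hv : v ≠ 0) : Sfn (Phi (u, v)) = Sfn (u, v) := by
  simp only [Sfn, Phi]
  field_simp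
  ring

theorem Sfn_Psi (hu : u ≠ 0) : Sfn (Psi (u, v)) = Sfn (u, v) := by
  simp only [Sfn, Psi]
  field_simp
  ring

theorem Phi_Phi (hv : v ≠ 0) : Phi (Phi (u, v)) = (u, v) := by
  simp only [Phi]
  field_simp

theorem Psi_Psi (hu : u ≠ 0) : Psi (Psi (u, v)) = (u, v) := by
  simp only [Psi]
  field_simp

theorem Psi_Phi (hv : v ≠ 0) : Psi (Phi (u, v)) = (u⁻¹ * v, u⁻¹) := by
  simp [Phi, Psi, hv]

theorem Phi_Psi_Phi (hu : u ≠ 0) (hv : v ≠ 0) : Phi (Psi (Phi (u, v))) = (v⁻¹, u⁻¹) := by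
  rw [Psi_Phi hv]
  simp [Phi, hu]

theorem Psi_Phi_Psi_Phi (hu : u ≠ 0) (hv : v ≠ 0) :
    Psi (Phi (Psi (Phi (u, v)))) = (v⁻¹, u * v⁻¹) := by
  rw [Phi_Psi_Phi hu hv]
  simp [Psi, mul_comm]

theorem Phi_Psi_Phi_Psi_Phi (hu : u ≠ 0) (hv : v ≠ 0) :
    Phi (Psi (Phi (Psi (Phi (u, v))))) = (u, u * v⁻¹) := by
  rw [Psi_Phi_Psi_Phi hu hv]
  simp only [Phi]
  field_simp

theorem Psi_Phi_Psi_Phi_Psi_Phi (hu : u ≠ 0) (hv : v ≠ 0) :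
    Psi (Phi (Psi (Phi (Psi (Phi (u, v)))))) = (u, v) := by
  rw [Phi_Psi_Phi_Psi_Phi hu hv]
  exact Psi_Psi hu

end Involutions

theorem group_WNSE_order_six :
    (∀ u v : Kf, u ≠ 0 → v ≠ 0 →
      Sfn (Phi (u, v)) = Sfn (u, v) ∧ Sfn (Psi (u, v)) = Sfn (u, v) ∧
      Phi (Phi (u, v)) = (u, v) ∧ Psi (Psi (u, v)) = (u, v)) ∧
    Phi (xg, yg) = (xg⁻¹ * yg, yg) ∧
    Psi (Phi (xg, yg)) = (xg⁻¹ * yg, xg⁻¹) ∧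
    Phi (Psi (Phi (xg, yg))) = (yg⁻¹, xg⁻¹) ∧
    Psi (Phi (Psi (Phi (xg, yg)))) = (yg⁻¹, xg * yg⁻¹) ∧
    Phi (Psi (Phi (Psi (Phi (xg, yg))))) = (xg, xg * yg⁻¹) ∧
    Psi (Phi (Psi (Phi (Psi (Phi (xg, yg)))))) = (xg, yg) ∧
    ({(xg, yg), (xg⁻¹ * yg, yg), (xg⁻¹ * yg, xg⁻¹), (yg⁻¹, xg⁻¹),
        (yg⁻¹, xg * yg⁻¹), (xg, xg * yg⁻¹)} : Set (Kf × Kf)).ncard = 6 := by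
  have hx := xg_ne_zero
  have hy := yg_ne_zero
  exact ⟨fun u v hu hv => ⟨Sfn_Phi hv, Sfn_Psi hu, Phi_Phi hv, Psi_Psi hu⟩, rfl, Psi_Phi hy,
    Phi_Psi_Phi hx hy, Psi_Phi_Psi_Phi hx hy, Phi_Psi_Phi_Psi_Phi hx hy,
    Psi_Phi_Psi_Phi_Psi_Phi hx hy, ncard_orbit_eq_six hx hy xg_sq_ne_yg yg_sq_ne_xg xg_mul_yg_ne_one⟩

end
end

section
/- Under the substitution y = 1/x, the generating function of quarter-plane walks with steps W, N, SE satisfies Q(x, 1/x; t) = (1 − t/x − √(1 − 2t/x + t²/x² − 4t²x)) / (2x t²); equivalently, Q(x,1/x;t) is algebraic of degree 2 over ℚ(x,t), satisfying x t² Q² − (1 − t x̄) Q + 1 = 0. -/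
open Finset

/-- The series Q(x, 1/x; t), a power series in t with coefficients in ℚ(x). -/
noncomputable def Qdiag : PowerSeries (RatFunc ℚ) :=
  PowerSeries.mk fun n =>
    ∑ i ∈ range (n + 1), ∑ j ∈ range (n + 1),
      (qwalkCount {(-1, 0), (0, 1), (1, -1)} n ((i : ℤ), (j : ℤ)) : RatFunc ℚ) *
        RatFunc.X ^ i * (RatFunc.X⁻¹) ^ j

def Wc : ℕ → ℤ × ℤ → ℕ
  | 0, e => if e = (0, 0) then 1 else 0
  | n+1, e =>
    if 0 ≤ e.1 ∧ 0 ≤ e.2 then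
      Wc n (e.1 + 1, e.2) + Wc n (e.1, e.2 - 1) + Wc n (e.1 - 1, e.2 + 1)
    else 0

def Sw : Set (ℤ × ℤ) := {(-1, 0), (0, 1), (1, -1)}

def WSp (n : ℕ) (e : ℤ × ℤ) : Type :=
  {w : Fin (n + 1) → ℤ × ℤ //
    w 0 = (0, 0) ∧
    (∀ i : Fin n, w i.succ - w i.castSucc ∈ Sw) ∧
    (∀ i, 0 ≤ (w i).1 ∧ 0 ≤ (w i).2) ∧
    w (Fin.last n) = e}

instance WSp_finite (n : ℕ) (e : ℤ × ℤ) : Finite (WSp n e) := by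
  have hS : Sw.Finite := (((Set.finite_singleton _).insert _).insert _)
  haveI := hS.to_subtype
  apply Finite.of_injective
    (f := fun (w : WSp n e) => fun (i : Fin n) => (⟨w.1 i.succ - w.1 i.castSucc, w.2.2.1 i⟩ : ↥Sw))
  intro w1 w2 h
  apply Subtype.ext
  funext i
  induction i using Fin.induction with
  | zero => rw [w1.2.1, w2.2.1]
  | succ i ih =>
    have h2 : w1.1 i.succ - w1.1 i.castSucc = w2.1 i.succ - w2.1 i.castSucc :=
      congrArg Subtype.val (congrFun h i)
    have e1 : w1.1 i.succ = (w1.1 i.succ - w1.1 i.castSucc) + w1.1 i.castSucc := by ring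
    have e2 : w2.1 i.succ = (w2.1 i.succ - w2.1 i.castSucc) + w2.1 i.castSucc := by ring
    rw [e1, e2, h2, ih]

lemma WSp_empty (n : ℕ) (e : ℤ × ℤ) (he : ¬(0 ≤ e.1 ∧ 0 ≤ e.2)) : IsEmpty (WSp n e) :=
  ⟨fun w => he (w.2.2.2.2 ▸ w.2.2.2.1 (Fin.last n))⟩

lemma WSp_zero_card (e : ℤ × ℤ) : Nat.card (WSp 0 e) = if e = (0, 0) then 1 else 0 := by
  split
  case isTrue h =>
    subst h
    have u : WSp 0 ((0:ℤ), (0:ℤ)) :=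
      ⟨fun _ => (0, 0), rfl, fun i => i.elim0, fun _ => by norm_num, rfl⟩
    rw [Nat.card_eq_one_iff_unique]
    constructor
    · constructor
      intro w1 w2
      apply Subtype.ext
      funext i
      have hi : i = 0 := Fin.ext (by omega)
      rw [hi, w1.2.1, w2.2.1]
    · exact ⟨u⟩
  case isFalse h =>
    haveI : IsEmpty (WSp 0 e) := ⟨fun w => h (by rw [← w.2.2.2.2]; exact w.2.1)⟩
    exact Nat.card_of_isEmpty

lemma last_step (n : ℕ) (e : ℤ × ℤ) (w : WSp (n+1) e) :
    e - w.1 ((Fin.last n).castSucc) ∈ Sw := by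
  have h := w.2.2.1 (Fin.last n)
  rw [Fin.succ_last, w.2.2.2.2] at h
  exact h

lemma init_mem (n : ℕ) (e p : ℤ × ℤ) (w : WSp (n+1) e)
    (hp : w.1 ((Fin.last n).castSucc) = p) :
    (Fin.init w.1) 0 = (0, 0) ∧
    (∀ i : Fin n, (Fin.init w.1) i.succ - (Fin.init w.1) i.castSucc ∈ Sw) ∧
    (∀ i, 0 ≤ ((Fin.init w.1) i).1 ∧ 0 ≤ ((Fin.init w.1) i).2) ∧
    (Fin.init w.1) (Fin.last n) = p := by
  refine ⟨?_, ?_, ?_, hp⟩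
  · show w.1 ((0 : Fin (n+1)).castSucc) = _
    rw [Fin.castSucc_zero]
    exact w.2.1
  · intro i
    show w.1 (i.succ.castSucc) - w.1 (i.castSucc.castSucc) ∈ Sw
    rw [← Fin.succ_castSucc]
    exact w.2.2.1 i.castSucc
  · intro i
    exact w.2.2.2.1 i.castSucc

lemma snoc_mem (n : ℕ) (e p : ℤ × ℤ) (he : 0 ≤ e.1 ∧ 0 ≤ e.2) (hstep : e - p ∈ Sw)
    (u : Fin (n+1) → ℤ × ℤ)
    (hu : u 0 = (0, 0) ∧ (∀ i : Fin n, u i.succ - u i.castSucc ∈ Sw) ∧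
      (∀ i, 0 ≤ (u i).1 ∧ 0 ≤ (u i).2) ∧ u (Fin.last n) = p) :
    (Fin.snoc u e : Fin (n+2) → ℤ × ℤ) 0 = (0, 0) ∧
    (∀ i : Fin (n+1), (Fin.snoc u e : Fin (n+2) → ℤ × ℤ) i.succ
        - (Fin.snoc u e : Fin (n+2) → ℤ × ℤ) i.castSucc ∈ Sw) ∧
    (∀ i, 0 ≤ ((Fin.snoc u e : Fin (n+2) → ℤ × ℤ) i).1
        ∧ 0 ≤ ((Fin.snoc u e : Fin (n+2) → ℤ × ℤ) i).2) ∧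
    (Fin.snoc u e : Fin (n+2) → ℤ × ℤ) (Fin.last (n+1)) = e := by
  refine ⟨?_, ?_, ?_, by rw [Fin.snoc_last]⟩
  · rw [show (0 : Fin (n+2)) = (0 : Fin (n+1)).castSucc by rw [Fin.castSucc_zero]]
    rw [Fin.snoc_castSucc]
    exact hu.1
  · intro i
    induction i using Fin.lastCases with
    | last =>
      rw [Fin.succ_last, Fin.snoc_last, Fin.snoc_castSucc, hu.2.2.2]
      exact hstep
    | cast j =>
      rw [Fin.succ_castSucc, Fin.snoc_castSucc, Fin.snoc_castSucc]
      exact hu.2.1 j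
  · intro i
    induction i using Fin.lastCases with
    | last =>
      rw [Fin.snoc_last]
      exact he
    | cast j =>
      rw [Fin.snoc_castSucc]
      exact hu.2.2.1 j

lemma pair_ne1 (e : ℤ × ℤ) : ((e.1:ℤ), e.2 - 1) ≠ (e.1 + 1, e.2) := by
  intro h
  rw [Prod.ext_iff] at h
  omega

lemma pair_ne2 (e : ℤ × ℤ) : ((e.1:ℤ) - 1, e.2 + 1) ≠ (e.1 + 1, e.2) := by
  intro h
  rw [Prod.ext_iff] at h
  omega

lemma pair_ne3 (e : ℤ × ℤ) : ((e.1:ℤ) - 1, e.2 + 1) ≠ (e.1, e.2 - 1) := by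
  intro h
  rw [Prod.ext_iff] at h
  omega

lemma mem_Sw_cases {d : ℤ × ℤ} (h : d ∈ Sw) :
    d = (-1, 0) ∨ d = (0, 1) ∨ d = (1, -1) := h

lemma step1 (e : ℤ × ℤ) : e - ((e.1:ℤ) + 1, e.2) ∈ Sw := by
  have : e - ((e.1:ℤ) + 1, e.2) = (-1, 0) := by
    rw [Prod.ext_iff]
    constructor <;> simp
  rw [this]; left; rfl

lemma step2 (e : ℤ × ℤ) : e - ((e.1:ℤ), e.2 - 1) ∈ Sw := by
  have : e - ((e.1:ℤ), e.2 - 1) = (0, 1) := by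
    rw [Prod.ext_iff]
    constructor <;> simp
  rw [this]; right; left; rfl

lemma step3 (e : ℤ × ℤ) : e - ((e.1:ℤ) - 1, e.2 + 1) ∈ Sw := by
  have : e - ((e.1:ℤ) - 1, e.2 + 1) = (1, -1) := by
    rw [Prod.ext_iff]
    constructor <;> simp
  rw [this]; right; right; rfl

noncomputable def walkEquiv (n : ℕ) (e : ℤ × ℤ) (he : 0 ≤ e.1 ∧ 0 ≤ e.2) :
    WSp (n+1) e ≃ ((WSp n (e.1 + 1, e.2) ⊕ WSp n (e.1, e.2 - 1)) ⊕ WSp n (e.1 - 1, e.2 + 1)) where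
  toFun w :=
    if h1 : w.1 ((Fin.last n).castSucc) = (e.1 + 1, e.2) then
      .inl (.inl ⟨Fin.init w.1, init_mem n e _ w h1⟩)
    else if h2 : w.1 ((Fin.last n).castSucc) = (e.1, e.2 - 1) then
      .inl (.inr ⟨Fin.init w.1, init_mem n e _ w h2⟩)
    else
      .inr ⟨Fin.init w.1, init_mem n e _ w (by
        rcases mem_Sw_cases (last_step n e w) with h | h | h <;>
        · rw [Prod.ext_iff] at h
          simp only [Prod.fst_sub, Prod.snd_sub] at h
          first
          | (exfalso; apply h1; rw [Prod.ext_iff]; constructor <;> [omega; omega])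
          | (exfalso; apply h2; rw [Prod.ext_iff]; constructor <;> [omega; omega])
          | (rw [Prod.ext_iff]; constructor <;> [omega; omega]))⟩
  invFun u :=
    match u with
    | .inl (.inl u) => ⟨Fin.snoc u.1 e, snoc_mem n e _ he (step1 e) u.1 u.2⟩
    | .inl (.inr u) => ⟨Fin.snoc u.1 e, snoc_mem n e _ he (step2 e) u.1 u.2⟩
    | .inr u => ⟨Fin.snoc u.1 e, snoc_mem n e _ he (step3 e) u.1 u.2⟩
  left_inv w := by
    dsimp only
    by_cases h1 : w.1 ((Fin.last n).castSucc) = (e.1 + 1, e.2)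
    · simp only [dif_pos h1]
      apply Subtype.ext
      show Fin.snoc (Fin.init w.1) e = w.1
      calc Fin.snoc (Fin.init w.1) e
          = Fin.snoc (Fin.init w.1) (w.1 (Fin.last (n+1))) := by rw [w.2.2.2.2]
        _ = w.1 := Fin.snoc_init_self w.1
    · by_cases h2 : w.1 ((Fin.last n).castSucc) = (e.1, e.2 - 1)
      · simp only [dif_neg h1, dif_pos h2]
        apply Subtype.ext
        show Fin.snoc (Fin.init w.1) e = w.1
        calc Fin.snoc (Fin.init w.1) e
            = Fin.snoc (Fin.init w.1) (w.1 (Fin.last (n+1))) := by rw [w.2.2.2.2]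
          _ = w.1 := Fin.snoc_init_self w.1
      · simp only [dif_neg h1, dif_neg h2]
        apply Subtype.ext
        show Fin.snoc (Fin.init w.1) e = w.1
        calc Fin.snoc (Fin.init w.1) e
            = Fin.snoc (Fin.init w.1) (w.1 (Fin.last (n+1))) := by rw [w.2.2.2.2]
          _ = w.1 := Fin.snoc_init_self w.1
  right_inv u := by
    match u with
    | .inl (.inl u) =>
      dsimp only
      have hp : (Fin.snoc u.1 e : Fin (n+2) → ℤ × ℤ) ((Fin.last n).castSucc) = (e.1 + 1, e.2) := by
        rw [Fin.snoc_castSucc]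
        exact u.2.2.2.2
      rw [dif_pos hp]
      apply congrArg
      apply congrArg
      exact Subtype.ext (Fin.init_snoc (α := fun _ : Fin (n+2) => ℤ × ℤ) e u.1)
    | .inl (.inr u) =>
      dsimp only
      have hp : (Fin.snoc u.1 e : Fin (n+2) → ℤ × ℤ) ((Fin.last n).castSucc) = (e.1, e.2 - 1) := by
        rw [Fin.snoc_castSucc]
        exact u.2.2.2.2
      rw [dif_neg (show ¬_ by rw [hp]; exact pair_ne1 e), dif_pos hp]
      apply congrArg
      apply congrArg
      exact Subtype.ext (Fin.init_snoc (α := fun _ : Fin (n+2) => ℤ × ℤ) e u.1)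
    | .inr u =>
      dsimp only
      have hp : (Fin.snoc u.1 e : Fin (n+2) → ℤ × ℤ) ((Fin.last n).castSucc) = (e.1 - 1, e.2 + 1) := by
        rw [Fin.snoc_castSucc]
        exact u.2.2.2.2
      rw [dif_neg (show ¬_ by rw [hp]; exact pair_ne2 e), dif_neg (show ¬_ by rw [hp]; exact pair_ne3 e)]
      apply congrArg
      exact Subtype.ext (Fin.init_snoc (α := fun _ : Fin (n+2) => ℤ × ℤ) e u.1)

lemma qwalk_eq_Wc : ∀ (n : ℕ) (e : ℤ × ℤ), qwalkCount Sw n e = Wc n e := by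
  intro n
  induction n with
  | zero =>
    intro e
    show Nat.card (WSp 0 e) = _
    rw [WSp_zero_card, Wc]
  | succ n ih =>
    intro e
    show Nat.card (WSp (n+1) e) = _
    by_cases he : 0 ≤ e.1 ∧ 0 ≤ e.2
    · rw [Nat.card_congr (walkEquiv n e he), Nat.card_sum, Nat.card_sum, Wc, if_pos he]
      have i1 := ih (e.1 + 1, e.2)
      have i2 := ih (e.1, e.2 - 1)
      have i3 := ih (e.1 - 1, e.2 + 1)
      rw [qwalkCount] at i1 i2 i3
      show Nat.card (WSp n (e.1+1, e.2)) + Nat.card (WSp n (e.1, e.2-1)) + Nat.card (WSp n (e.1-1, e.2+1)) = _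
      rw [show Nat.card (WSp n (e.1+1, e.2)) = Wc n (e.1+1, e.2) from i1,
        show Nat.card (WSp n (e.1, e.2-1)) = Wc n (e.1, e.2-1) from i2,
        show Nat.card (WSp n (e.1-1, e.2+1)) = Wc n (e.1-1, e.2+1) from i3]
    · haveI := WSp_empty (n+1) e he
      rw [Nat.card_of_isEmpty, Wc, if_neg he]

noncomputable def hk (a b c : ℕ) : ℚ :=
  ((a+b+c).factorial : ℚ) * ((a:ℚ) - b + 1) * ((b:ℚ) - c + 1) * ((a:ℚ) - c + 2) /
    (((a+2).factorial : ℚ) * ((b+1).factorial : ℚ) * (c.factorial : ℚ))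

noncomputable def G (n : ℕ) (i j : ℤ) : ℚ :=
  if 0 ≤ i ∧ 0 ≤ j ∧ 2*i + j ≤ (n:ℤ) ∧ (3:ℤ) ∣ ((n:ℤ) - 2*i - j) then
    hk (((n:ℤ) - 2*i - j).toNat / 3 + i.toNat + j.toNat)
       (((n:ℤ) - 2*i - j).toNat / 3 + i.toNat)
       (((n:ℤ) - 2*i - j).toNat / 3)
  else 0

lemma G_zero {n : ℕ} {i j : ℤ}
    (h : ¬(0 ≤ i ∧ 0 ≤ j ∧ 2*i + j ≤ (n:ℤ) ∧ (3:ℤ) ∣ ((n:ℤ) - 2*i - j))) :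
    G n i j = 0 := if_neg h

lemma G_eval {n : ℕ} {i j : ℤ} (c : ℕ) (hi : 0 ≤ i) (hj : 0 ≤ j)
    (hc : (n:ℤ) - 2*i - j = 3*c) :
    G n i j = hk (c + i.toNat + j.toNat) (c + i.toNat) c := by
  have hcond : 0 ≤ i ∧ 0 ≤ j ∧ 2*i + j ≤ (n:ℤ) ∧ (3:ℤ) ∣ ((n:ℤ) - 2*i - j) :=
    ⟨hi, hj, by omega, ⟨c, by omega⟩⟩
  rw [G, if_pos hcond]
  have h3 : ((n:ℤ) - 2*i - j).toNat / 3 = c := by omega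
  rw [h3]

lemma G_rec (n : ℕ) (i j : ℤ) (hi : 0 ≤ i) (hj : 0 ≤ j) :
    G (n+1) i j = G n (i+1) j + G n i (j-1) + G n (i-1) (j+1) := by
  by_cases hdvd : (3:ℤ) ∣ ((n:ℤ) + 1 - 2*i - j)
  · obtain ⟨d, hd⟩ := hdvd
    by_cases hC : d < 0
    · rw [G_zero (by push_cast; omega), G_zero (by push_cast; omega),
        G_zero (by push_cast; omega), G_zero (by push_cast; omega)]
      norm_num
    · push_neg at hC
      obtain ⟨c, hcd⟩ : ∃ c : ℕ, (c:ℤ) = d := ⟨d.toNat, Int.toNat_of_nonneg hC⟩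
      obtain ⟨I, hI⟩ : ∃ I : ℕ, (I:ℤ) = i := ⟨i.toNat, Int.toNat_of_nonneg hi⟩
      obtain ⟨J, hJ⟩ : ∃ J : ℕ, (J:ℤ) = j := ⟨j.toNat, Int.toNat_of_nonneg hj⟩
      have hiI : i.toNat = I := by omega
      have hjJ : j.toNat = J := by omega
      have hIq : ((I:ℕ):ℚ) = ((i:ℤ):ℚ) := by exact_mod_cast congrArg (fun z : ℤ => (z:ℚ)) hI
      have hJq : ((J:ℕ):ℚ) = ((j:ℤ):ℚ) := by exact_mod_cast congrArg (fun z : ℤ => (z:ℚ)) hJ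
      have e0 : G (n+1) i j
          = ((n+1).factorial : ℚ) * (((c+I+J:ℕ):ℚ)-(c+I:ℕ)+1) * (((c+I:ℕ):ℚ)-c+1) * (((c+I+J:ℕ):ℚ)-c+2) /
            (((c+I+J+2).factorial : ℚ) * ((c+I+1).factorial : ℚ) * (c.factorial : ℚ)) := by
        rw [G_eval c hi hj (by push_cast; omega), hiI, hjJ, hk,
          show c+I+J+(c+I)+c = n+1 by omega]
      have e1 : G n (i+1) j
          = (c:ℚ) * (n.factorial:ℚ) * (((c+I+J:ℕ):ℚ)-(c+I:ℕ)+1) * (((c+I:ℕ):ℚ)-c+2) * (((c+I+J:ℕ):ℚ)-c+3) /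
            (((c+I+J+2).factorial : ℚ) * ((c+I+1).factorial : ℚ) * (c.factorial : ℚ)) := by
        rcases Nat.eq_zero_or_pos c with hc0 | hcpos
        · rw [G_zero (by intro h; omega), hc0]
          norm_num
        · obtain ⟨e, rfl⟩ : ∃ e, c = e + 1 := ⟨c - 1, by omega⟩
          rw [G_eval e (by omega) hj (by omega),
            show e + (i+1).toNat + j.toNat = (e+1)+I+J by omega,
            show e + (i+1).toNat = (e+1)+I by omega, hk,
            show (e+1)+I+J+((e+1)+I)+e = n by omega,
            show ((e+1):ℕ).factorial = (e+1)*(e.factorial) from rfl]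
          push_cast
          rw [div_eq_div_iff (by positivity) (by positivity)]
          ring
      have e2 : G n i (j-1)
          = (((c+I+J:ℕ):ℚ)+2) * (n.factorial:ℚ) * (((c+I+J:ℕ):ℚ)-(c+I:ℕ)) * (((c+I:ℕ):ℚ)-c+1) * (((c+I+J:ℕ):ℚ)-c+1) /
            (((c+I+J+2).factorial : ℚ) * ((c+I+1).factorial : ℚ) * (c.factorial : ℚ)) := by
        rcases Nat.eq_zero_or_pos J with hJ0 | hJpos
        · rw [G_zero (by intro h; omega), hJ0]
          norm_num
        · obtain ⟨e, rfl⟩ : ∃ e, J = e + 1 := ⟨J - 1, by omega⟩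
          rw [G_eval c hi (by omega) (by omega),
            show c + i.toNat + (j-1).toNat = c+I+e by omega, hiI, hk,
            show c+I+e+(c+I)+c = n by omega,
            show c+I+(e+1)+2 = (c+I+e+2)+1 from rfl,
            Nat.factorial_succ (c+I+e+2)]
          push_cast
          rw [div_eq_div_iff (by positivity) (by positivity)]
          ring
      have e3 : G n (i-1) (j+1)
          = (((c+I:ℕ):ℚ)+1) * (n.factorial:ℚ) * (((c+I+J:ℕ):ℚ)-(c+I:ℕ)+2) * (((c+I:ℕ):ℚ)-c) * (((c+I+J:ℕ):ℚ)-c+2) /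
            (((c+I+J+2).factorial : ℚ) * ((c+I+1).factorial : ℚ) * (c.factorial : ℚ)) := by
        rcases Nat.eq_zero_or_pos I with hI0 | hIpos
        · rw [G_zero (by intro h; omega), hI0]
          norm_num
        · obtain ⟨e, rfl⟩ : ∃ e, I = e + 1 := ⟨I - 1, by omega⟩
          rw [G_eval c (by omega) (by omega) (by omega),
            show c + (i-1).toNat + (j+1).toNat = c+(e+1)+J by omega,
            show c + (i-1).toNat = c+e by omega, hk,
            show c+(e+1)+J+(c+e)+c = n by omega,
            show c+(e+1)+1 = (c+e+1)+1 from rfl,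
            Nat.factorial_succ (c+e+1)]
          push_cast
          rw [div_eq_div_iff (by positivity) (by positivity)]
          ring
      rw [e0, e1, e2, e3, ← add_div, ← add_div]
      congr 1
      rw [Nat.factorial_succ n]
      have hn : ((n:ℕ):ℚ) = ((c:ℕ):ℚ)*3 + 2*I + J - 1 := by
        have : ((3*c + 2*I + J:ℕ):ℚ) = ((n+1:ℕ):ℚ) := by exact_mod_cast congrArg (fun m : ℕ => (m:ℚ)) (by omega : 3*c + 2*I + J = n+1)
        push_cast at this
        linarith
      push_cast
      rw [hn]
      ring
  · rw [G_zero (by push_cast; intro h; exact hdvd (by omega)),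
      G_zero (by push_cast; intro h; exact hdvd (by omega)),
      G_zero (by push_cast; intro h; exact hdvd (by omega)),
      G_zero (by push_cast; intro h; exact hdvd (by omega))]
    norm_num

lemma Wc_eq_G : ∀ (n : ℕ) (i j : ℤ), (Wc n (i, j) : ℚ) = G n i j := by
  intro n
  induction n with
  | zero =>
    intro i j
    rcases eq_or_ne (i, j) ((0:ℤ), (0:ℤ)) with h | h
    · obtain ⟨rfl, rfl⟩ : i = 0 ∧ j = 0 := Prod.ext_iff.1 h
      rw [Wc, if_pos rfl, G_eval 0 le_rfl le_rfl (by norm_num)]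
      norm_num [hk, Nat.factorial]
    · rw [Wc, if_neg h, G_zero]
      · norm_num
      · intro hc
        apply h
        have : i = 0 ∧ j = 0 := by
          obtain ⟨h1, h2, h3, h4⟩ := hc
          constructor <;> omega
        simp [this.1, this.2]
  | succ n ih =>
    intro i j
    by_cases hq : 0 ≤ i ∧ 0 ≤ j
    · rw [Wc, if_pos hq]
      push_cast
      rw [ih (i+1) j, ih i (j-1), ih (i-1) (j+1), G_rec n i j hq.1 hq.2]
    · rw [Wc, if_neg hq, G_zero (by tauto)]
      norm_num

/-- telescoping antiderivative for the sum of hook values along a diagonal -/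
noncomputable def gq (n b c : ℕ) : ℚ :=
  (c:ℚ) * ((c:ℚ)^2 - ((n:ℚ)-(b:ℚ)+3)*(c:ℚ) + (3+2*(n:ℚ)-2*(b:ℚ)+(n:ℚ)*(b:ℚ)-2*(b:ℚ)^2)) * (n.factorial:ℚ) /
    (((n-b-c+2).factorial:ℚ) * ((b+1).factorial:ℚ) * (c.factorial:ℚ))

lemma gq_zero (n b : ℕ) : gq n b 0 = 0 := by simp [gq]

lemma hk_tel (a b c : ℕ) (hcb : c ≤ b) (hba : b ≤ a) (ha : 1 ≤ a) :
    hk a b c = gq (a+b+c) b (c+1) - gq (a+b+c) b c := by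
  rw [hk, gq, gq, show a+b+c-b-(c+1)+2 = a+1 by omega, show a+b+c-b-c+2 = a+2 by omega,
    Nat.factorial_succ c, show (a:ℕ)+2 = (a+1)+1 from rfl, Nat.factorial_succ (a+1)]
  push_cast
  field_simp
  ring

def TT (n b : ℕ) : ℕ := n.choose (2*b) * catalan b

lemma cat_cast (b : ℕ) : (catalan b : ℚ) = ((2*b).factorial : ℚ) / ((b.factorial:ℚ) * ((b+1).factorial:ℚ)) := by
  have h := succ_mul_catalan_eq_centralBinom b
  have h2 : ((b+1) * catalan b : ℕ) = ((2*b).choose b : ℕ) := by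
    rw [h, Nat.centralBinom_eq_two_mul_choose]
  have h3 : (((b+1) * catalan b : ℕ) : ℚ) = (((2*b).choose b : ℕ) : ℚ) := by exact_mod_cast h2
  rw [Nat.cast_choose ℚ (by omega : b ≤ 2*b), show 2*b-b = b by omega] at h3
  push_cast at h3
  rw [Nat.factorial_succ b]
  push_cast
  have hb : (b.factorial : ℚ) ≠ 0 := Nat.cast_ne_zero.2 (Nat.factorial_ne_zero b)
  field_simp at h3 ⊢
  linarith [h3]

lemma TT_cast (n b : ℕ) (h : 2*b ≤ n) :
    (TT n b : ℚ) = (n.factorial : ℚ) / (((n-2*b).factorial:ℚ) * ((b.factorial:ℚ) * ((b+1).factorial:ℚ))) := by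
  rw [TT]
  push_cast
  rw [Nat.cast_choose ℚ h, cat_cast]
  have h1 : (((2*b).factorial:ℚ)) ≠ 0 := Nat.cast_ne_zero.2 (Nat.factorial_ne_zero _)
  field_simp

lemma gq_top1 (n b : ℕ) (h : 3*b ≤ n) (hn : 1 ≤ n) : gq n b (b+1) = TT n b := by
  have h2 : 2*b ≤ n := by omega
  rw [gq, TT_cast n b h2, show n-b-(b+1)+2 = (n-2*b)+1 by omega, Nat.factorial_succ (n-2*b),
    Nat.factorial_succ b]
  have e1 : ((n-2*b:ℕ):ℚ) = (n:ℚ) - 2*b := by push_cast [h2]; ring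
  push_cast [e1]
  have h1 : (((n-2*b).factorial:ℚ)) ≠ 0 := Nat.cast_ne_zero.2 (Nat.factorial_ne_zero _)
  have h4 : ((b.factorial:ℚ)) ≠ 0 := Nat.cast_ne_zero.2 (Nat.factorial_ne_zero _)
  have h5 : (((b+1).factorial:ℚ)) ≠ 0 := Nat.cast_ne_zero.2 (Nat.factorial_ne_zero _)
  have h6 : ((n:ℚ) - 2*b + 1) ≠ 0 := by
    have : (0:ℚ) ≤ (n:ℚ) - 2*b := by push_cast [← e1]; positivity
    linarith
  field_simp
  ring_nf
  have h6' : (1 - (b:ℚ)*2 + n) ≠ 0 := by contrapose! h6; linarith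
  field_simp
  ring

lemma gq_top2 (n b : ℕ) (h2 : 2*b ≤ n) (hb : 1 ≤ b) : gq n b (n-2*b+1) = TT n b := by
  rw [gq, TT_cast n b h2, show n-b-(n-2*b+1)+2 = b+1 by omega,
    show (n-2*b+1:ℕ) = (n-2*b)+1 from rfl, Nat.factorial_succ (n-2*b), Nat.factorial_succ b]
  have e1 : ((n-2*b:ℕ):ℚ) = (n:ℚ) - 2*b := by push_cast [h2]; ring
  push_cast [e1]
  have h1 : (((n-2*b).factorial:ℚ)) ≠ 0 := Nat.cast_ne_zero.2 (Nat.factorial_ne_zero _)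
  have h4 : ((b.factorial:ℚ)) ≠ 0 := Nat.cast_ne_zero.2 (Nat.factorial_ne_zero _)
  have h5 : (((b+1).factorial:ℚ)) ≠ 0 := Nat.cast_ne_zero.2 (Nat.factorial_ne_zero _)
  have h6 : ((n:ℚ) - 2*b + 1) ≠ 0 := by
    have : (0:ℚ) ≤ (n:ℚ) - 2*b := by push_cast [← e1]; positivity
    linarith
  have h7 : ((b:ℚ) + 1) ≠ 0 := by positivity
  field_simp
  ring

lemma Wc_outside {n : ℕ} {i j : ℤ} (h : i < 0 ∨ j < 0) : Wc n (i, j) = 0 := by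
  cases n with
  | zero =>
    rw [Wc, if_neg]
    intro hc
    obtain ⟨h1, h2⟩ := Prod.ext_iff.1 hc
    simp at h1 h2
    omega
  | succ n =>
    rw [Wc, if_neg]
    intro hc
    simp only at hc
    omega

lemma sum_Wc (n b : ℕ) :
    ∑ c ∈ range (b+1), (Wc n ((b:ℤ)-c, (n:ℤ)-2*b-c) : ℚ) = TT n b := by
  rcases Nat.eq_zero_or_pos n with rfl | hn
  · rcases Nat.eq_zero_or_pos b with rfl | hb
    · rw [Finset.sum_range_one]
      norm_num [Wc, TT]
    · have hz : ∀ c ∈ range (b+1), (Wc 0 ((b:ℤ)-c, ((0:ℕ):ℤ)-2*b-c) : ℚ) = 0 := by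
        intro c hc
        simp only [mem_range] at hc
        rw [Wc, if_neg (by
          intro hcon
          rw [Prod.ext_iff] at hcon
          simp only at hcon
          omega)]
        norm_num
      rw [Finset.sum_congr rfl hz, Finset.sum_const, smul_zero, TT,
        Nat.choose_eq_zero_of_lt (by omega), zero_mul, Nat.cast_zero]
  by_cases h2 : 2*b ≤ n
  · rcases le_or_gt (3*b) n with h3 | h3
    · have key : ∀ c ∈ range (b+1), (Wc n ((b:ℤ)-c, (n:ℤ)-2*b-c) : ℚ) = gq n b (c+1) - gq n b c := by
        intro c hc
        simp only [mem_range] at hc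
        rw [Wc_eq_G, G_eval c (by omega) (by omega) (by push_cast; omega),
          show c + ((b:ℤ)-c).toNat + ((n:ℤ)-2*b-c).toNat = n-b-c by omega,
          show c + ((b:ℤ)-c).toNat = b by omega]
        have h := hk_tel (n-b-c) b c (by omega) (by omega) (by omega)
        rw [show n-b-c+b+c = n by omega] at h
        exact h
      rw [Finset.sum_congr rfl key, Finset.sum_range_sub (gq n b), gq_zero, sub_zero,
        gq_top1 n b h3 hn]
    · have hb : 1 ≤ b := by omega
      have hsub : range (n-2*b+1) ⊆ range (b+1) := by
        intro x hx; simp only [mem_range] at hx ⊢; omega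
      rw [← Finset.sum_subset hsub (by
        intro c hc hc2
        simp only [mem_range] at hc hc2
        have : (Wc n ((b:ℤ)-c, (n:ℤ)-2*b-c)) = 0 := Wc_outside (Or.inr (by omega))
        rw [this]; norm_num)]
      have key : ∀ c ∈ range (n-2*b+1), (Wc n ((b:ℤ)-c, (n:ℤ)-2*b-c) : ℚ) = gq n b (c+1) - gq n b c := by
        intro c hc
        simp only [mem_range] at hc
        rw [Wc_eq_G, G_eval c (by omega) (by omega) (by push_cast; omega),
          show c + ((b:ℤ)-c).toNat + ((n:ℤ)-2*b-c).toNat = n-b-c by omega,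
          show c + ((b:ℤ)-c).toNat = b by omega]
        have h := hk_tel (n-b-c) b c (by omega) (by omega) (by omega)
        rw [show n-b-c+b+c = n by omega] at h
        exact h
      rw [Finset.sum_congr rfl key, Finset.sum_range_sub (gq n b), gq_zero, sub_zero,
        gq_top2 n b h2 hb]
  · have hz : ∀ c ∈ range (b+1), (Wc n ((b:ℤ)-c, (n:ℤ)-2*b-c) : ℚ) = 0 := by
      intro c hc
      rw [Wc_outside (Or.inr (by omega))]
      norm_num
    rw [Finset.sum_congr rfl hz, Finset.sum_const, smul_zero, TT,
      Nat.choose_eq_zero_of_lt (by omega), zero_mul, Nat.cast_zero]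

lemma VU (A : ℕ) : ∀ (m B : ℕ),
    ∑ pq ∈ antidiagonal m, pq.1.choose A * pq.2.choose B = (m+1).choose (A+B+1) := by
  intro m
  induction m with
  | zero =>
    intro B
    rw [Finset.Nat.antidiagonal_zero, Finset.sum_singleton]
    rcases Nat.eq_zero_or_pos (A+B) with h0 | hpos
    · have hA : A = 0 := by omega
      have hB : B = 0 := by omega
      subst hA; subst hB; rfl
    · rw [Nat.choose_eq_zero_of_lt (show 1 < A+B+1 by omega)]
      rcases Nat.eq_zero_or_pos A with rfl | hA
      · rw [Nat.choose_eq_zero_of_lt (show 0 < B by omega), mul_zero]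
      · rw [Nat.choose_eq_zero_of_lt (show 0 < A from hA), zero_mul]
  | succ m ih =>
    intro B
    rw [Finset.Nat.antidiagonal_succ', Finset.sum_cons, Finset.sum_map]
    simp only [Function.Embedding.coe_prodMap, Function.Embedding.refl_apply,
      Function.Embedding.coeFn_mk, Prod.map_fst, Prod.map_snd]
    cases B with
    | zero =>
      simp only [Nat.choose_zero_right, mul_one]
      have h0 := ih 0
      simp only [Nat.choose_zero_right, mul_one, Nat.add_zero] at h0
      rw [h0, show A + 0 + 1 = A + 1 by omega]
      exact (Nat.choose_succ_succ (m+1) A).symm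
    | succ B' =>
      rw [Nat.choose_zero_succ, mul_zero, zero_add]
      have key : ∀ pq ∈ antidiagonal m,
          pq.1.choose A * (pq.2+1).choose (B'+1)
            = pq.1.choose A * pq.2.choose B' + pq.1.choose A * pq.2.choose (B'+1) := by
        intro pq _
        rw [Nat.choose_succ_succ pq.2 B', Nat.mul_add]
      rw [Finset.sum_congr rfl key, Finset.sum_add_distrib, ih B', ih (B'+1),
        show A+(B'+1)+1 = (A+B'+1)+1 by omega]
      exact (Nat.choose_succ_succ (m+1) (A+B'+1)).symm

lemma TT_rec (n B' : ℕ) :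
    TT (n+2) (B'+1) = TT (n+1) (B'+1)
      + ∑ pq ∈ antidiagonal n, ∑ uv ∈ antidiagonal B', TT pq.1 uv.1 * TT pq.2 uv.2 := by
  have step : ∀ uv ∈ antidiagonal B',
      ∑ pq ∈ antidiagonal n, TT pq.1 uv.1 * TT pq.2 uv.2
        = (n+1).choose (2*B'+1) * (catalan uv.1 * catalan uv.2) := by
    intro uv huv
    have huv' : uv.1 + uv.2 = B' := Finset.HasAntidiagonal.mem_antidiagonal.mp huv
    have e : ∀ pq : ℕ × ℕ, TT pq.1 uv.1 * TT pq.2 uv.2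
        = (pq.1.choose (2*uv.1) * pq.2.choose (2*uv.2)) * (catalan uv.1 * catalan uv.2) := by
      intro pq; rw [TT, TT]; ring
    simp only [e]
    rw [← Finset.sum_mul, VU (2*uv.1) n (2*uv.2), show 2*uv.1 + 2*uv.2 + 1 = 2*B'+1 by omega]
  rw [Finset.sum_comm, Finset.sum_congr rfl step, ← Finset.mul_sum, ← catalan_succ']
  rw [TT, TT, show 2*(B'+1) = (2*B'+1)+1 by omega, Nat.choose_succ_succ (n+1) (2*B'+1),
    Nat.add_mul]
  simp only [Nat.succ_eq_add_one]
  ring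

noncomputable def Pp (n : ℕ) : Polynomial ℚ :=
  ∑ b ∈ range (n+1), Polynomial.C ((TT n b : ℚ)) * Polynomial.X ^ b

lemma coeff_Pp (n B : ℕ) : (Pp n).coeff B = (TT n B : ℚ) := by
  rw [Pp, Polynomial.finset_sum_coeff]
  simp only [Polynomial.coeff_C_mul, Polynomial.coeff_X_pow, mul_ite, mul_one, mul_zero]
  rw [Finset.sum_ite_eq (range (n+1)) B (fun b => ((TT n b : ℚ)))]
  by_cases hB : B ∈ range (n+1)
  · rw [if_pos hB]
  · rw [if_neg hB, TT, Nat.choose_eq_zero_of_lt (by simp at hB; omega), zero_mul, Nat.cast_zero]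

noncomputable def Mser : PowerSeries (Polynomial ℚ) := PowerSeries.mk Pp

lemma Mser_eq : Mser = 1 + Mser * PowerSeries.X
    + Mser^2 * PowerSeries.C (R := Polynomial ℚ) Polynomial.X * PowerSeries.X^2 := by
  apply PowerSeries.ext
  intro n
  rw [map_add, map_add, PowerSeries.coeff_mul_X_pow']
  match n with
  | 0 =>
    rw [PowerSeries.coeff_zero_mul_X, PowerSeries.coeff_one, Mser, PowerSeries.coeff_mk]
    norm_num [Pp, TT]
  | 1 =>
    rw [PowerSeries.coeff_succ_mul_X, PowerSeries.coeff_one, Mser, PowerSeries.coeff_mk,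
      PowerSeries.coeff_mk, if_neg (by omega : ¬(1 = 0)), if_neg (by omega : ¬(2 ≤ 1))]
    simp only [zero_add, add_zero]
    apply Polynomial.ext
    intro B
    rw [coeff_Pp, coeff_Pp]
    rcases Nat.eq_zero_or_pos B with rfl | hB
    · rfl
    · rw [TT, TT, Nat.choose_eq_zero_of_lt (by omega), Nat.choose_eq_zero_of_lt (by omega)]
  | (m+2) =>
    rw [PowerSeries.coeff_succ_mul_X, PowerSeries.coeff_one, Mser, PowerSeries.coeff_mk,
      PowerSeries.coeff_mk, if_neg (by omega : ¬(m+2 = 0)), if_pos (by omega : 2 ≤ m+2),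
      show m+2-2 = m from rfl, PowerSeries.coeff_mul_C, pow_two, PowerSeries.coeff_mul]
    simp only [PowerSeries.coeff_mk, zero_add]
    apply Polynomial.ext
    intro B
    rw [coeff_Pp, Polynomial.coeff_add, coeff_Pp]
    rcases B with _ | B'
    · rw [Polynomial.mul_coeff_zero, Polynomial.coeff_X_zero, mul_zero, add_zero]
      norm_num [TT]
    · rw [Polynomial.coeff_mul_X, Polynomial.finset_sum_coeff]
      simp only [Polynomial.coeff_mul, coeff_Pp]
      exact_mod_cast TT_rec m B'

lemma Wc_supp {n : ℕ} {i j : ℤ} (h : Wc n (i, j) ≠ 0) :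
    0 ≤ i ∧ 0 ≤ j ∧ 2*i + j ≤ (n:ℤ) ∧ (3:ℤ) ∣ ((n:ℤ) - 2*i - j) := by
  by_contra hc
  apply h
  have hg := Wc_eq_G n i j
  rw [G_zero hc] at hg
  exact_mod_cast hg

lemma Xmono (u v u' v' : ℕ) (h : u + v' = u' + v) :
    (RatFunc.X : RatFunc ℚ)^u * (RatFunc.X⁻¹)^v = RatFunc.X^u' * (RatFunc.X⁻¹)^v' := by
  have hX : (RatFunc.X : RatFunc ℚ) ≠ 0 := RatFunc.X_ne_zero
  rw [inv_pow, inv_pow, ← div_eq_mul_inv, ← div_eq_mul_inv,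
    div_eq_div_iff (pow_ne_zero v hX) (pow_ne_zero v' hX), ← pow_add, ← pow_add, h]

lemma coeff_Qdiag (n : ℕ) :
    PowerSeries.coeff (R := RatFunc ℚ) n Qdiag
      = ∑ b ∈ range (n+1), (TT n b : RatFunc ℚ) * RatFunc.X ^ (3*b) * (RatFunc.X⁻¹) ^ n := by
  rw [Qdiag, PowerSeries.coeff_mk]
  have hq : ∀ i j : ℕ,
      (qwalkCount {(-1, 0), (0, 1), (1, -1)} n ((i : ℤ), (j : ℤ)) : RatFunc ℚ)
        = (Wc n ((i:ℤ), (j:ℤ)) : RatFunc ℚ) := by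
    intro i j
    rw [show ({(-1, 0), (0, 1), (1, -1)} : Set (ℤ × ℤ)) = Sw from rfl, qwalk_eq_Wc]
  have hL : (∑ i ∈ range (n + 1), ∑ j ∈ range (n + 1),
      (qwalkCount {(-1, 0), (0, 1), (1, -1)} n ((i : ℤ), (j : ℤ)) : RatFunc ℚ) *
        RatFunc.X ^ i * (RatFunc.X⁻¹) ^ j)
      = ∑ p ∈ (range (n+1)) ×ˢ (range (n+1)),
        (Wc n ((p.1:ℤ), (p.2:ℤ)) : RatFunc ℚ) * RatFunc.X ^ p.1 * (RatFunc.X⁻¹) ^ p.2 := by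
    rw [Finset.sum_product]
    exact Finset.sum_congr rfl fun i _ => Finset.sum_congr rfl fun j _ => by rw [hq]
  rw [hL]
  have hsum : ∀ b, (TT n b : RatFunc ℚ)
      = ∑ c ∈ range (b+1), (Wc n ((b:ℤ)-c, (n:ℤ)-2*b-c) : RatFunc ℚ) := by
    intro b
    have h := congrArg (algebraMap ℚ (RatFunc ℚ)) (sum_Wc n b)
    rw [map_sum] at h
    simp only [map_natCast] at h
    exact h.symm
  have hR : (∑ b ∈ range (n+1), (TT n b : RatFunc ℚ) * RatFunc.X ^ (3*b) * (RatFunc.X⁻¹) ^ n)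
      = ∑ p ∈ (range (n+1)) ×ˢ (range (n+1)),
        (Wc n ((p.1:ℤ)-p.2, (n:ℤ)-2*p.1-p.2) : RatFunc ℚ) * RatFunc.X ^ (3*p.1) * (RatFunc.X⁻¹) ^ n := by
    rw [Finset.sum_product]
    apply Finset.sum_congr rfl
    intro b hb
    simp only [mem_range] at hb
    rw [hsum b, Finset.sum_mul, Finset.sum_mul]
    apply Finset.sum_subset
    · intro c hc
      simp only [mem_range] at hc ⊢
      omega
    · intro c _ hc2
      simp only [mem_range] at hc2
      rw [Wc_outside (Or.inl (by omega))]
      norm_num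
  rw [hR]
  conv_lhs => rw [← Finset.sum_filter_of_ne (p := fun p => Wc n ((p.1:ℤ), (p.2:ℤ)) ≠ 0)
      (by intro p _ hne hw; exact hne (by rw [hw]; norm_num))]
  conv_rhs => rw [← Finset.sum_filter_of_ne (p := fun p => Wc n ((p.1:ℤ)-p.2, (n:ℤ)-2*p.1-p.2) ≠ 0)
      (by intro p _ hne hw; exact hne (by rw [hw]; norm_num))]
  symm
  apply Finset.sum_nbij' (i := fun p => (p.1 - p.2, n - 2*p.1 - p.2))
    (j := fun p => ((n + p.1 - p.2)/3, (n - 2*p.1 - p.2)/3))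
  · intro p hp
    simp only [Finset.mem_filter, Finset.mem_product, mem_range] at hp ⊢
    obtain ⟨⟨hb, hc⟩, hw⟩ := hp
    obtain ⟨h1, h2, h3, h4⟩ := Wc_supp hw
    refine ⟨⟨by omega, by omega⟩, ?_⟩
    have e1 : ((p.1 - p.2 : ℕ) : ℤ) = (p.1:ℤ) - p.2 := by omega
    have e2 : ((n - 2*p.1 - p.2 : ℕ) : ℤ) = (n:ℤ) - 2*p.1 - p.2 := by omega
    rw [e1, e2]
    exact hw
  · intro p hp
    simp only [Finset.mem_filter, Finset.mem_product, mem_range] at hp ⊢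
    obtain ⟨⟨hi, hj⟩, hw⟩ := hp
    obtain ⟨h1, h2, h3, h4⟩ := Wc_supp hw
    constructor
    · constructor <;> omega
    · have e1 : (((n + p.1 - p.2)/3 : ℕ) : ℤ) - ((n - 2*p.1 - p.2)/3 : ℕ) = (p.1:ℤ) := by omega
      have e2 : (n:ℤ) - 2*((n + p.1 - p.2)/3 : ℕ) - ((n - 2*p.1 - p.2)/3 : ℕ) = (p.2:ℤ) := by omega
      rw [e1, e2]
      exact hw
  · intro p hp
    simp only [Finset.mem_filter, Finset.mem_product, mem_range] at hp
    obtain ⟨⟨hb, hc⟩, hw⟩ := hp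
    obtain ⟨h1, h2, h3, h4⟩ := Wc_supp hw
    have : (n + (p.1 - p.2) - (n - 2*p.1 - p.2))/3 = p.1 := by omega
    have : (n - 2*(p.1 - p.2) - (n - 2*p.1 - p.2))/3 = p.2 := by omega
    rw [Prod.ext_iff]
    constructor <;> simp <;> omega
  · intro p hp
    simp only [Finset.mem_filter, Finset.mem_product, mem_range] at hp
    obtain ⟨⟨hi, hj⟩, hw⟩ := hp
    obtain ⟨h1, h2, h3, h4⟩ := Wc_supp hw
    rw [Prod.ext_iff]
    constructor <;> simp <;> omega
  · intro p hp
    simp only [Finset.mem_filter, Finset.mem_product, mem_range] at hp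
    obtain ⟨⟨hb, hc⟩, hw⟩ := hp
    obtain ⟨h1, h2, h3, h4⟩ := Wc_supp hw
    have e1 : ((p.1 - p.2 : ℕ) : ℤ) = (p.1:ℤ) - p.2 := by omega
    have e2 : ((n - 2*p.1 - p.2 : ℕ) : ℤ) = (n:ℤ) - 2*p.1 - p.2 := by omega
    rw [mul_assoc, mul_assoc, e1, e2,
      Xmono (3*p.1) n (p.1 - p.2) (n - 2*p.1 - p.2) (by omega)]

noncomputable def psir : Polynomial ℚ →+* RatFunc ℚ :=
  (Polynomial.aeval (RatFunc.X ^ 3 : RatFunc ℚ)).toRingHom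

noncomputable def Phir : PowerSeries (Polynomial ℚ) →+* PowerSeries (RatFunc ℚ) :=
  (PowerSeries.rescale (RatFunc.X⁻¹ : RatFunc ℚ)).comp (PowerSeries.map psir)

lemma PS_map_C {R S : Type*} [CommRing R] [CommRing S] (f : R →+* S) (r : R) :
    PowerSeries.map f (PowerSeries.C (R := R) r) = PowerSeries.C (R := S) (f r) := by
  apply PowerSeries.ext
  intro n
  rw [PowerSeries.coeff_map, PowerSeries.coeff_C, PowerSeries.coeff_C]
  split <;> simp

lemma PS_rescale_C {R : Type*} [CommRing R] (a r : R) :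
    PowerSeries.rescale a (PowerSeries.C (R := R) r) = PowerSeries.C (R := R) r := by
  apply PowerSeries.ext
  intro n
  rw [PowerSeries.coeff_rescale, PowerSeries.coeff_C]
  split
  case isTrue h => subst h; simp
  case isFalse h => simp

lemma Phir_X : Phir PowerSeries.X
    = PowerSeries.C (R := RatFunc ℚ) (RatFunc.X⁻¹) * PowerSeries.X := by
  rw [Phir, RingHom.comp_apply, PowerSeries.map_X, PowerSeries.rescale_X]

lemma Phir_CX : Phir (PowerSeries.C (R := Polynomial ℚ) Polynomial.X)
    = PowerSeries.C (R := RatFunc ℚ) (RatFunc.X ^ 3) := by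
  rw [Phir, RingHom.comp_apply, PS_map_C, PS_rescale_C]
  congr 1
  exact Polynomial.aeval_X _

lemma Qdiag_eq_Phir : Qdiag = Phir Mser := by
  apply PowerSeries.ext
  intro n
  rw [coeff_Qdiag, Phir, RingHom.comp_apply, PowerSeries.coeff_rescale,
    PowerSeries.coeff_map, Mser, PowerSeries.coeff_mk, Pp, map_sum, Finset.mul_sum]
  apply Finset.sum_congr rfl
  intro b _
  rw [map_mul, map_pow]
  have h1 : psir (Polynomial.C ((TT n b : ℚ))) = ((TT n b : ℕ) : RatFunc ℚ) := by
    rw [psir]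
    show Polynomial.aeval _ (Polynomial.C ((TT n b : ℚ))) = _
    rw [Polynomial.aeval_C]
    exact map_natCast (algebraMap ℚ (RatFunc ℚ)) (TT n b)
  have h2 : psir Polynomial.X = RatFunc.X ^ 3 := by
    rw [psir]
    exact Polynomial.aeval_X _
  rw [h1, h2, ← pow_mul]
  ring


theorem Qdiag_algebraic_degree_two :
    PowerSeries.C (R := RatFunc ℚ) RatFunc.X * PowerSeries.X ^ 2 * Qdiag ^ 2 -
        (1 - PowerSeries.X * PowerSeries.C (R := RatFunc ℚ) RatFunc.X⁻¹) * Qdiag + 1 = 0 := by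
  have h2 := congrArg Phir Mser_eq
  rw [map_add, map_add, map_mul, map_mul, map_mul, map_pow, map_pow, map_one,
    ← Qdiag_eq_Phir, Phir_X, Phir_CX] at h2
  have hxx : (PowerSeries.C (R := RatFunc ℚ) (RatFunc.X ^ 3))
      * (PowerSeries.C (R := RatFunc ℚ) (RatFunc.X⁻¹)) ^ 2 = PowerSeries.C (R := RatFunc ℚ) RatFunc.X := by
    rw [← map_pow, ← map_mul]
    congr 1
    have hX : (RatFunc.X : RatFunc ℚ) ≠ 0 := RatFunc.X_ne_zero
    field_simp
  linear_combination (-1 : PowerSeries (RatFunc ℚ)) * h2 - Qdiag^2 * PowerSeries.X^2 * hxx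
end
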